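/- For every integer p ≥ 1 and every real x, the higher order Fubini polynomial is the image of the higher order Bell polynomial of order p−1 under the linear operator L on polynomials determined by L((x)_m) = m!·x^m (where (x)_m = x(x−1)⋯(x−m+1) is the falling factorial): explicitly, writing B_n^{p−1}(x) = Σ_{m=0}^n c_{n,m}·(x)_m in the falling factorial basis, one has F_n^p(x) = Σ_{m=0}^n c_{n,m}·m!·x^m; equivalently, since B_n^{p−1}(x) = Σ_{m=0}^n S^p_{n,m}·(x)_m, the coefficients of B_n^{p−1} in the falling factorial basis are exactly S^p_{n,m}. -/

import Mathlib

/-- Stirling numbers of the second kind. -/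
def S2 : ℕ → ℕ → ℕ
  | 0, 0 => 1
  | 0, _ + 1 => 0
  | _ + 1, 0 => 0
  | n + 1, m + 1 => (m + 1) * S2 n (m + 1) + S2 n m

/-- Entries `S^p_{n,m}` of the `p`-th power of the Stirling matrix (for `p ≥ 1`;
the value at `p = 0` is junk). -/
def Sp : ℕ → ℕ → ℕ → ℕ
  | 0, _, _ => 0
  | 1, n, m => S2 n m
  | p + 2, n, m => ∑ k ∈ Finset.range (n + 1), S2 n k * Sp (p + 1) k m

/-- Higher order Bell polynomials: `B_n^0(x) = x^n`, `B_n^p(x) = ∑_{m=0}^n S^p_{n,m} x^m`. -/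
noncomputable def BellP : ℕ → ℕ → ℝ → ℝ
  | 0, n, x => x ^ n
  | p + 1, n, x => ∑ m ∈ Finset.range (n + 1), (Sp (p + 1) n m : ℝ) * x ^ m

/-- Higher order Fubini polynomials: `F_n^p(x) = ∑_{m=0}^n S^p_{n,m} m! x^m`. -/
noncomputable def FubPoly (p n : ℕ) (x : ℝ) : ℝ :=
  ∑ m ∈ Finset.range (n + 1), (Sp p n m : ℝ) * m.factorial * x ^ m

/-!
Expanding each `x ^ k` in `B_n^{p-1}(x) = ∑_k S^{p-1}_{n,k} x^k` by the Stirling identity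
`x ^ k = ∑_m S(k,m) (x)_m` gives the falling factorial coefficients `∑_k S^{p-1}_{n,k} S(k,m)`,
which equal `S^p_{n,m}` because the powers of the Stirling matrix commute with it. These
coefficients are unique: evaluating at `x = 0, 1, 2, …`, where `(j)_m = 0` for `m > j` and
`(m)_m = m!`, recovers them one at a time. Hence `c_m = S^p_{n,m}`, and `F_n^p` is the image of
`B_n^{p-1}` under `L` by its definition.
-/

open Finset

theorem S2_eq_stirlingSecond : S2 = Nat.stirlingSecond := by
  funext n m
  induction n generalizing m with
  | zero => cases m <;> rfl
  | succ n ih => cases m <;> simp [S2, Nat.stirlingSecond_succ_succ, ih]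

theorem S2_eq_zero_of_lt {n m : ℕ} (h : n < m) : S2 n m = 0 := by
  rw [S2_eq_stirlingSecond]
  exact Nat.stirlingSecond_eq_zero_of_lt h

theorem sum_range_eq_sum_range_succ_of_lt {M : Type*} [AddCommMonoid M] {f : ℕ → M} {n N : ℕ}
    (hN : n < N) (hf : ∀ k, n < k → f k = 0) :
    ∑ k ∈ range N, f k = ∑ k ∈ range (n + 1), f k :=
  (sum_subset (range_subset_range.2 hN) fun k _ hk => hf k (by simpa using hk)).symm

theorem pow_eq_sum_stirlingSecond_mul_descPochhammer_eval {R : Type*} [CommRing R] (x : R) :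
    ∀ {n N : ℕ}, n < N →
      x ^ n = ∑ k ∈ range N, (Nat.stirlingSecond n k : R) * (descPochhammer R k).eval x
  | 0, N + 1, _ => by simp [sum_range_succ']
  | n + 1, M + 1, h => by
    have ih := pow_eq_sum_stirlingSecond_mul_descPochhammer_eval x (Nat.lt_of_succ_lt_succ h)
    set g : ℕ → R := fun k => k * Nat.stirlingSecond n k * (descPochhammer R k).eval x
    have hg_top : ∑ k ∈ range (M + 1), g k = ∑ k ∈ range M, g k := by
      simp [sum_range_succ, g, Nat.stirlingSecond_eq_zero_of_lt (Nat.lt_of_succ_lt_succ h)]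
    have hg_shift : ∑ k ∈ range (M + 1), g k = ∑ k ∈ range M,
        ((k + 1 : ℕ) * Nat.stirlingSecond n (k + 1) : R) * (descPochhammer R (k + 1)).eval x := by
      simp [sum_range_succ', g, mul_assoc]
    have hsucc : ∀ k, (Nat.stirlingSecond (n + 1) (k + 1) : R) * (descPochhammer R (k + 1)).eval x
        = ((k + 1 : ℕ) * Nat.stirlingSecond n (k + 1) : R) * (descPochhammer R (k + 1)).eval x
          + Nat.stirlingSecond n k * (descPochhammer R (k + 1)).eval x := fun k => by
      rw [Nat.stirlingSecond_succ_succ]; push_cast; ring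
    rw [sum_range_succ', Nat.stirlingSecond_succ_zero, Nat.cast_zero, zero_mul, add_zero,
      sum_congr rfl fun k _ => hsucc k, sum_add_distrib, ← hg_shift, hg_top, pow_succ, ih, sum_mul,
      ← sum_add_distrib]
    refine sum_congr rfl fun k _ => ?_
    rw [descPochhammer_succ_eval]
    ring

theorem Sp_succ_eq_sum {p n N : ℕ} (hp : 1 ≤ p) (hN : n < N) (m : ℕ) :
    Sp (p + 1) n m = ∑ k ∈ range N, S2 n k * Sp p k m := by
  obtain ⟨q, rfl⟩ := Nat.exists_eq_add_of_le' hp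
  exact (sum_range_eq_sum_range_succ_of_lt hN fun k hk => by simp [S2_eq_zero_of_lt hk]).symm

theorem Sp_succ_eq_sum_Sp_mul_S2 {p : ℕ} (hp : 1 ≤ p) :
    ∀ {n N : ℕ}, n < N → ∀ m, Sp (p + 1) n m = ∑ k ∈ range N, Sp p n k * S2 k m := by
  induction p, hp using Nat.le_induction with
  | base => exact fun hN m => Sp_succ_eq_sum le_rfl hN m
  | succ p hp ih =>
    intro n N hN m
    calc Sp (p + 1 + 1) n m = ∑ j ∈ range N, S2 n j * Sp (p + 1) j m :=
          Sp_succ_eq_sum (by omega) hN m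
      _ = ∑ j ∈ range N, S2 n j * ∑ k ∈ range N, Sp p j k * S2 k m :=
          sum_congr rfl fun j hj => by rw [ih (mem_range.1 hj)]
      _ = ∑ k ∈ range N, ∑ j ∈ range N, S2 n j * Sp p j k * S2 k m := by
          rw [sum_comm]; simp_rw [mul_sum, mul_assoc]
      _ = ∑ k ∈ range N, Sp (p + 1) n k * S2 k m := by
          simp_rw [Sp_succ_eq_sum hp hN, sum_mul]

theorem eq_zero_of_sum_mul_descPochhammer_eval_eq_zero {R : Type*} [CommRing R] [IsDomain R]
    [CharZero R] {N : ℕ} {a : ℕ → R}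
    (h : ∀ x : R, ∑ k ∈ range N, a k * (descPochhammer R k).eval x = 0) :
    ∀ m < N, a m = 0 := by
  intro m
  induction m using Nat.strong_induction_on with
  | _ m ih =>
    intro hm
    have hx : ∑ k ∈ range N, a k * (descPochhammer R k).eval (m : R) = a m * m.factorial := by
      rw [sum_eq_single_of_mem m (mem_range.2 hm), descPochhammer_eval_eq_descFactorial,
        Nat.descFactorial_self]
      intro k hk hkm
      rcases hkm.lt_or_gt with hlt | hgt
      · rw [ih k hlt (by simpa using hk), zero_mul]
      · rw [descPochhammer_eval_eq_descFactorial, Nat.descFactorial_eq_zero_iff_lt.2 hgt,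
          Nat.cast_zero, mul_zero]
    exact (mul_eq_zero.1 (hx ▸ h m)).resolve_right (Nat.cast_ne_zero.2 m.factorial_ne_zero)

theorem eq_of_sum_mul_descPochhammer_eval_eq {R : Type*} [CommRing R] [IsDomain R]
    [CharZero R] {N : ℕ} {a b : ℕ → R}
    (h : ∀ x : R, ∑ k ∈ range N, a k * (descPochhammer R k).eval x
      = ∑ k ∈ range N, b k * (descPochhammer R k).eval x) :
    ∀ m < N, a m = b m := fun m hm =>
  sub_eq_zero.1 <| eq_zero_of_sum_mul_descPochhammer_eval_eq_zero (a := fun k => a k - b k)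
    (fun x => by simp_rw [sub_mul, sum_sub_distrib, h x, sub_self]) m hm

theorem BellP_eq_sum_Sp_succ_mul_descPochhammer_eval (p n : ℕ) (x : ℝ) :
    BellP p n x = ∑ m ∈ range (n + 1), (Sp (p + 1) n m : ℝ) * (descPochhammer ℝ m).eval x := by
  have stirling : ∀ k ≤ n, x ^ k = ∑ m ∈ range (n + 1), (S2 k m : ℝ) * (descPochhammer ℝ m).eval x :=
    fun k hk => by
      rw [S2_eq_stirlingSecond]
      exact pow_eq_sum_stirlingSecond_mul_descPochhammer_eval x (Nat.lt_succ_of_le hk)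
  cases p with
  | zero => exact stirling n le_rfl
  | succ p =>
    calc BellP (p + 1) n x = ∑ k ∈ range (n + 1), (Sp (p + 1) n k : ℝ) * x ^ k := rfl
      _ = ∑ m ∈ range (n + 1), ∑ k ∈ range (n + 1),
            (Sp (p + 1) n k : ℝ) * S2 k m * (descPochhammer ℝ m).eval x := by
          rw [sum_comm]
          refine sum_congr rfl fun k hk => ?_
          rw [stirling k (Nat.le_of_lt_succ (mem_range.1 hk)), mul_sum]
          simp_rw [mul_assoc]
      _ = ∑ m ∈ range (n + 1), (Sp (p + 2) n m : ℝ) * (descPochhammer ℝ m).eval x := by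
          simp_rw [Sp_succ_eq_sum_Sp_mul_S2 (Nat.le_add_left 1 p) n.lt_succ_self, Nat.cast_sum,
            Nat.cast_mul, sum_mul]

/-- If `B_n^{p-1}(x) = ∑_{m=0}^n c_m (x)_m` in the falling factorial basis, then the
coefficients are exactly `S^p_{n,m}` and `F_n^p(x) = ∑_{m=0}^n c_m m! x^m`; i.e. `F_n^p`
is the image of `B_n^{p-1}` under the linear operator `L` with `L((x)_m) = m! x^m`. -/
theorem fubini_is_L_of_bell (p : ℕ) (hp : 1 ≤ p) (n : ℕ) (c : ℕ → ℝ)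
    (hc : ∀ x : ℝ,
      BellP (p - 1) n x = ∑ m ∈ Finset.range (n + 1), c m * (descPochhammer ℝ m).eval x) :
    (∀ m ≤ n, c m = (Sp p n m : ℝ)) ∧
      ∀ x : ℝ, FubPoly p n x = ∑ m ∈ Finset.range (n + 1), c m * m.factorial * x ^ m := by
  obtain ⟨q, rfl⟩ := Nat.exists_eq_add_of_le' hp
  have hcoeff : ∀ m ≤ n, c m = (Sp (q + 1) n m : ℝ) := fun m hm =>
    eq_of_sum_mul_descPochhammer_eval_eq
      (fun x => (hc x).symm.trans (BellP_eq_sum_Sp_succ_mul_descPochhammer_eval q n x)) m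
      (Nat.lt_succ_of_le hm)
  refine ⟨hcoeff, fun x => sum_congr rfl fun m hm => ?_⟩
  rw [hcoeff m (Nat.le_of_lt_succ (mem_range.1 hm))]
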